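/- arXiv:1401.7590 — 3 statements merged into one kernel-verified Lean document; each statement's English description precedes it below -/
import Mathlib

section
/- Let H₁, H₂ be Banach spaces, D₁ : V → W₁ and D₂ : V → W₂ bounded linear maps between Banach spaces such that the combined map D̃ = (D₁, D₂) : V → W₁ × W₂ is Fredholm. Then the restriction D₁|_{ker D₂} : ker D₂ → W₁ is Fredholm. -/
/-- A bounded linear operator between normed spaces is Fredholm if it has
finite-dimensional kernel, finite-dimensional cokernel, and closed range. -/
def IsFredholm {V W : Type*}
    [NormedAddCommGroup V] [NormedSpace ℝ V]
    [NormedAddCommGroup W] [NormedSpace ℝ W]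
    (f : V →L[ℝ] W) : Prop :=
  FiniteDimensional ℝ (LinearMap.ker (f : V →ₗ[ℝ] W)) ∧
  FiniteDimensional ℝ (W ⧸ LinearMap.range (f : V →ₗ[ℝ] W)) ∧
  IsClosed ((LinearMap.range (f : V →ₗ[ℝ] W) : Submodule ℝ W) : Set W)

/-! The restriction `D₁|_{ker D₂}` is the map `(D₁, D₂)` seen on the slice `W₁ × {0}`:
its kernel is the kernel of `(D₁, D₂)`, and its range is the preimage of the range of
`(D₁, D₂)` under `w ↦ (w, 0)`. Pulling back along this continuous linear injection preserves
closedness, and it embeds the cokernel of the restriction into that of `(D₁, D₂)`. -/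

namespace LinearMap

variable {R M M₂ M₃ : Type*} [Semiring R] [AddCommMonoid M] [Module R M]
  [AddCommMonoid M₂] [Module R M₂] [AddCommMonoid M₃] [Module R M₃]

theorem ker_comp_ker_subtype (f : M →ₗ[R] M₂) (g : M →ₗ[R] M₃) :
    ker (f ∘ₗ (ker g).subtype) = (ker (f.prod g)).comap (ker g).subtype := by
  ext v
  simp

theorem range_comp_ker_subtype (f : M →ₗ[R] M₂) (g : M →ₗ[R] M₃) :
    range (f ∘ₗ (ker g).subtype) = (range (f.prod g)).comap (inl R M₂ M₃) := by
  ext w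
  simp [and_comm]

def kerCompKerSubtypeEquiv (f : M →ₗ[R] M₂) (g : M →ₗ[R] M₃) :
    ker (f ∘ₗ (ker g).subtype) ≃ₗ[R] ker (f.prod g) :=
  (LinearEquiv.ofEq _ _ (ker_comp_ker_subtype f g)).trans
    (Submodule.comapSubtypeEquivOfLe (by rw [ker_prod]; exact inf_le_right))

end LinearMap

theorem Submodule.finiteDimensional_quotient_comap {K M N : Type*} [DivisionRing K]
    [AddCommGroup M] [Module K M] [AddCommGroup N] [Module K N]
    (f : M →ₗ[K] N) (q : Submodule K N) [FiniteDimensional K (N ⧸ q)] :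
    FiniteDimensional K (M ⧸ q.comap f) :=
  FiniteDimensional.of_injective (q.comap f |>.mapQ q f le_rfl) <| by
    rw [← LinearMap.ker_eq_bot, Submodule.ker_mapQ, Submodule.mkQ_map_self]

theorem isFredholm_restriction_of_isFredholm_prod_general
    {V W₁ W₂ : Type*}
    [NormedAddCommGroup V] [NormedSpace ℝ V]
    [NormedAddCommGroup W₁] [NormedSpace ℝ W₁]
    [NormedAddCommGroup W₂] [NormedSpace ℝ W₂]
    (D₁ : V →L[ℝ] W₁) (D₂ : V →L[ℝ] W₂)
    (h : IsFredholm (D₁.prod D₂)) :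
    IsFredholm (D₁.comp (LinearMap.ker (D₂ : V →ₗ[ℝ] W₂)).subtypeL) := by
  obtain ⟨hker, hcoker, hclosed⟩ := h
  rw [ContinuousLinearMap.coe_prod] at hker hcoker hclosed
  rw [IsFredholm, ContinuousLinearMap.toLinearMap_comp, Submodule.toLinearMap_subtypeL,
    LinearMap.range_comp_ker_subtype]
  exact ⟨(LinearMap.kerCompKerSubtypeEquiv _ _).symm.finiteDimensional,
    Submodule.finiteDimensional_quotient_comap _ _,
    hclosed.preimage (ContinuousLinearMap.inl ℝ W₁ W₂).continuous⟩

/-- If `D₁ : V → W₁`, `D₂ : V → W₂` are bounded linear maps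
between Banach spaces such that `D̃ = (D₁, D₂) : V → W₁ × W₂` is Fredholm,
then the restriction `D₁|_{ker D₂} : ker D₂ → W₁` is Fredholm. -/
theorem isFredholm_restriction_of_isFredholm_prod
    {V W₁ W₂ : Type*}
    [NormedAddCommGroup V] [NormedSpace ℝ V] [CompleteSpace V]
    [NormedAddCommGroup W₁] [NormedSpace ℝ W₁] [CompleteSpace W₁]
    [NormedAddCommGroup W₂] [NormedSpace ℝ W₂] [CompleteSpace W₂]
    (D₁ : V →L[ℝ] W₁) (D₂ : V →L[ℝ] W₂)
    (h : IsFredholm (D₁.prod D₂)) :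
    IsFredholm (D₁.comp (LinearMap.ker (D₂ : V →ₗ[ℝ] W₂)).subtypeL) :=
  isFredholm_restriction_of_isFredholm_prod_general D₁ D₂ h
end

section
/- Let M be a compact connected oriented Riemannian manifold with boundary, and let K be the space of harmonic functions ξ on M (Δξ = 0) that are locally constant on ∂M. Then the map ev : K → ℝ^{b₀(∂M)} sending ξ to the vector of integrals (∫_{N_i} t_i(⋆ dξ))_i has kernel exactly the constant functions, and its image lies in the hyperplane {r : Σᵢ rᵢ = 0}; in particular ev restricts to an isomorphism from K₀ = {ξ ∈ K : Σᵢ cᵢ(ξ) = 0} onto this hyperplane, where cᵢ(ξ) is the boundary value on N_i. -/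
/-!
Green's formula against the constant function `1` shows that the boundary fluxes of a harmonic
`ξ` sum to zero; against `ξ` itself it gives `‖dξ‖² = Σᵢ cᵢ(ξ) ∫_{N i} tᵢ(⋆dξ)`, so vanishing
fluxes force `dξ = 0`, i.e. `ξ` is constant. A constant function in `K₀` has boundary values summing
to zero, hence vanishing boundary values, hence is `0` by uniqueness for the Dirichlet problem.
Finally, the boundary-value map identifies `K₀` with the hyperplane, so the injective flux map
`K₀ → hyperplane` is an isomorphism by counting dimensions.
-/

open LinearMap

theorem const_eq_zero_of_sum_eq_zero {ι : Type*} [Fintype ι] {r : ℝ}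
    (h : ∑ _ : ι, r = 0) : (fun _ : ι => r) = 0 := by
  funext i
  have : Nonempty ι := ⟨i⟩
  have : (Fintype.card ι : ℝ) ≠ 0 := Nat.cast_ne_zero.mpr Fintype.card_ne_zero
  simpa [this] using h

section Green

variable {Ω0 Ω1 ι : Type*}
  [NormedAddCommGroup Ω0] [InnerProductSpace ℝ Ω0]
  [NormedAddCommGroup Ω1] [InnerProductSpace ℝ Ω1] [Fintype ι]
  {d : Ω0 →ₗ[ℝ] Ω1} {dstar : Ω1 →ₗ[ℝ] Ω0} {bInt : ι → Ω1 →ₗ[ℝ] ℝ}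
  {K : Submodule ℝ Ω0} {cval : Ω0 →ₗ[ℝ] (ι → ℝ)} {const : ℝ →ₗ[ℝ] Ω0}

variable (d dstar bInt K cval) in
def GreenFormula : Prop :=
  ∀ ξ ∈ K, ∀ η : Ω1, (inner ℝ (d ξ) η : ℝ) = inner ℝ ξ (dstar η) + ∑ i, cval ξ i * bInt i η

theorem sum_flux_eq_zero
    (hGreen : GreenFormula d dstar bInt K cval)
    {u : Ω0} (hu : u ∈ K) (hdu : d u = 0) (hcu : cval u = fun _ => 1)
    {ξ : Ω0} (hξ : dstar (d ξ) = 0) :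
    ∑ i, bInt i (d ξ) = 0 := by
  simpa [hdu, hξ, hcu] using (hGreen u hu (d ξ)).symm

theorem d_eq_zero_of_flux_eq_zero
    (hGreen : GreenFormula d dstar bInt K cval)
    {ξ : Ω0} (hξK : ξ ∈ K) (hξ : dstar (d ξ) = 0) (hflux : ∀ i, bInt i (d ξ) = 0) :
    d ξ = 0 := by
  simpa [hξ, hflux] using hGreen ξ hξK (d ξ)

theorem eq_zero_of_flux_eq_zero
    (hGreen : GreenFormula d dstar bInt K cval)
    (hconn : ∀ ξ : Ω0, d ξ = 0 → ∃ r : ℝ, ξ = const r)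
    (hcval_const : ∀ r : ℝ, cval (const r) = fun _ => r)
    (hinj : Function.Injective fun ξ : K => cval ξ)
    {ξ : Ω0} (hξK : ξ ∈ K) (hξ : dstar (d ξ) = 0) (hcsum : ∑ i, cval ξ i = 0)
    (hflux : ∀ i, bInt i (d ξ) = 0) :
    ξ = 0 := by
  obtain ⟨r, hr⟩ := hconn ξ (d_eq_zero_of_flux_eq_zero hGreen hξK hξ hflux)
  have hcξ : cval ξ = 0 := by
    rw [hr, hcval_const] at hcsum ⊢
    exact const_eq_zero_of_sum_eq_zero hcsum
  exact congrArg Subtype.val (hinj (a₁ := ⟨ξ, hξK⟩) (a₂ := 0) (by simpa using hcξ))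

end Green

theorem nonempty_inf_ker_comp_equiv_ker {R V W U : Type*} [CommRing R]
    [AddCommGroup V] [Module R V] [AddCommGroup W] [Module R W] [AddCommGroup U] [Module R U]
    {K : Submodule R V} {c : V →ₗ[R] W} (hc : Function.Bijective fun ξ : K => c ξ)
    (s : W →ₗ[R] U) :
    Nonempty (↥(K ⊓ ker (s ∘ₗ c)) ≃ₗ[R] ↥(ker s)) := by
  let f : ↥(K ⊓ ker (s ∘ₗ c)) →ₗ[R] ↥(ker s) :=
    (c ∘ₗ (K ⊓ ker (s ∘ₗ c)).subtype).codRestrict (ker s) fun ξ => ξ.2.2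
  refine ⟨LinearEquiv.ofBijective f ⟨fun ξ ζ h => ?_, fun w => ?_⟩⟩
  · have : (⟨ξ, ξ.2.1⟩ : K) = ⟨ζ, ζ.2.1⟩ := hc.1 (congrArg Subtype.val h)
    exact Subtype.ext (congrArg (Subtype.val : K → V) this)
  · obtain ⟨ξ, hξ⟩ := hc.2 w
    refine ⟨⟨ξ, ξ.2, ?_⟩, Subtype.ext hξ⟩
    simp [hξ]

def boundaryFlux {Ω0 Ω1 ι : Type*} [AddCommGroup Ω0] [Module ℝ Ω0]
    [AddCommGroup Ω1] [Module ℝ Ω1]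
    (d : Ω0 →ₗ[ℝ] Ω1) (bInt : ι → Ω1 →ₗ[ℝ] ℝ) : Ω0 →ₗ[ℝ] (ι → ℝ) :=
  LinearMap.pi fun i => bInt i ∘ₗ d

@[simp]
theorem boundaryFlux_apply {Ω0 Ω1 ι : Type*} [AddCommGroup Ω0] [Module ℝ Ω0]
    [AddCommGroup Ω1] [Module ℝ Ω1]
    (d : Ω0 →ₗ[ℝ] Ω1) (bInt : ι → Ω1 →ₗ[ℝ] ℝ) (ξ : Ω0) (i : ι) :
    boundaryFlux d bInt ξ i = bInt i (d ξ) :=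
  rfl

/-- Abstraction: `Ω0, Ω1` are the `L²` pre-Hilbert spaces of functions and
1-forms on `M`; `d` the differential, `dstar` the codifferential, `bInt i η
= ∫_{N i} tᵢ(⋆η)`; `cval ξ` records the (locally constant) boundary values of
`ξ ∈ K`; `const r` is the constant function `r` and connectedness of `M` is
`hconn`; harmonicity of `K` is `hharm`; unique solvability of the Dirichlet
problem is `hdirichlet`; and `hGreen` is Green's formula
`∫_M ⟨dξ, η⟩ = ∫_M ⟨ξ, d*η⟩ + Σᵢ cᵢ(ξ) ∫_{N i} tᵢ(⋆η)` for `ξ ∈ K`. -/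
theorem harmonic_boundary_evaluation_general
    {Ω0 Ω1 : Type*}
    [NormedAddCommGroup Ω0] [InnerProductSpace ℝ Ω0]
    [NormedAddCommGroup Ω1] [InnerProductSpace ℝ Ω1]
    {ι : Type*} [Fintype ι]
    (d : Ω0 →ₗ[ℝ] Ω1) (dstar : Ω1 →ₗ[ℝ] Ω0)
    (bInt : ι → Ω1 →ₗ[ℝ] ℝ)
    (K : Submodule ℝ Ω0)
    (cval : Ω0 →ₗ[ℝ] (ι → ℝ)) (const : ℝ →ₗ[ℝ] Ω0)
    (hharm : ∀ ξ ∈ K, dstar (d ξ) = 0)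
    (hconstK : ∀ r : ℝ, const r ∈ K)
    (hcval_const : ∀ r : ℝ, cval (const r) = fun _ => r)
    (hd_const : ∀ r : ℝ, d (const r) = 0)
    (hconn : ∀ ξ : Ω0, d ξ = 0 → ∃ r : ℝ, ξ = const r)
    (hdirichlet : Function.Bijective fun ξ : K => cval (ξ : Ω0))
    (hGreen : ∀ ξ ∈ K, ∀ η : Ω1,
      (inner ℝ (d ξ) η : ℝ) = inner ℝ ξ (dstar η) + ∑ i, cval ξ i * bInt i η) :
    -- (1) the kernel of ev consists exactly of the constant functions
    (∀ ξ ∈ K, (∀ i, bInt i (d ξ) = 0) ↔ ∃ r : ℝ, ξ = const r) ∧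
    -- (2) the image of ev lies in the hyperplane {r : Σᵢ rᵢ = 0}
    (∀ ξ ∈ K, ∑ i, bInt i (d ξ) = 0) ∧
    -- (3) ev restricts to an isomorphism K₀ ≅ {r : Σᵢ rᵢ = 0}
    Nonempty { e :
        ↥(K ⊓ LinearMap.ker
            ((∑ i : ι, (LinearMap.proj i : (ι → ℝ) →ₗ[ℝ] ℝ)) ∘ₗ cval)) ≃ₗ[ℝ]
          ↥(LinearMap.ker (∑ i : ι, (LinearMap.proj i : (ι → ℝ) →ₗ[ℝ] ℝ))) //
        ∀ ξ, ∀ i : ι, ((e ξ : ι → ℝ) i) = bInt i (d (ξ : Ω0)) } := by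
  have hsum : ∀ ξ ∈ K, ∑ i, bInt i (d ξ) = 0 := fun ξ hξ =>
    sum_flux_eq_zero hGreen (hconstK 1) (hd_const 1) (hcval_const 1) (hharm ξ hξ)
  have hker : ∀ ξ ∈ K, (∀ i, bInt i (d ξ) = 0) ↔ ∃ r : ℝ, ξ = const r := fun ξ hξ =>
    ⟨fun h => hconn ξ (d_eq_zero_of_flux_eq_zero hGreen hξ (hharm ξ hξ) h),
      by rintro ⟨r, rfl⟩ i; simp [hd_const]⟩
  set K₀ := K ⊓ ker ((∑ i : ι, (LinearMap.proj i : (ι → ℝ) →ₗ[ℝ] ℝ)) ∘ₗ cval)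
  let ev : ↥K₀ →ₗ[ℝ] ↥(ker (∑ i : ι, (LinearMap.proj i : (ι → ℝ) →ₗ[ℝ] ℝ))) :=
    (boundaryFlux d bInt ∘ₗ K₀.subtype).codRestrict _ fun ξ => by
      simpa using hsum ξ ξ.2.1
  have hev : Function.Injective ev := (injective_iff_map_eq_zero ev).mpr fun ξ hξ =>
    Subtype.ext <| eq_zero_of_flux_eq_zero hGreen hconn hcval_const hdirichlet.1 ξ.2.1
      (hharm ξ ξ.2.1) (by simpa using ξ.2.2) fun i => congrFun (congrArg Subtype.val hξ) i
  obtain ⟨e⟩ := nonempty_inf_ker_comp_equiv_ker hdirichlet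
    (∑ i : ι, (LinearMap.proj i : (ι → ℝ) →ₗ[ℝ] ℝ))
  have := e.symm.finiteDimensional
  exact ⟨hker, hsum, ⟨⟨ev.linearEquivOfInjective hev e.finrank_eq, fun _ _ => rfl⟩⟩⟩

/-- Let `K` be the space of harmonic functions on `M` that are
locally constant on `∂M` (solutions of the Dirichlet problem with constant
boundary value `cᵢ(ξ)` on each boundary component `N i`), and let
`ev : K → ℝ^{b₀(∂M)}`, `ev(ξ)ᵢ = ∫_{N i} tᵢ(⋆dξ)`.  Then `ker ev` is exactly
the constant functions, the image of `ev` lies in the hyperplane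
`{r : Σᵢ rᵢ = 0}`, and `ev` restricts to an isomorphism from
`K₀ = {ξ ∈ K : Σᵢ cᵢ(ξ) = 0}` onto that hyperplane.

Abstraction: `Ω0, Ω1` are the `L²` pre-Hilbert spaces of functions and
1-forms on `M`; `d` the differential, `dstar` the codifferential, `bInt i η
= ∫_{N i} tᵢ(⋆η)`; `cval ξ` records the (locally constant) boundary values of
`ξ ∈ K`; `const r` is the constant function `r` and connectedness of `M` is
`hconn`; harmonicity of `K` is `hharm`; unique solvability of the Dirichlet
problem is `hdirichlet`; and `hGreen` is Green's formula
`∫_M ⟨dξ, η⟩ = ∫_M ⟨ξ, d*η⟩ + Σᵢ cᵢ(ξ) ∫_{N i} tᵢ(⋆η)` for `ξ ∈ K`. -/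
theorem harmonic_boundary_evaluation
    {Ω0 Ω1 : Type*}
    [NormedAddCommGroup Ω0] [InnerProductSpace ℝ Ω0]
    [NormedAddCommGroup Ω1] [InnerProductSpace ℝ Ω1]
    {ι : Type*} [Fintype ι] [Nonempty ι]
    (d : Ω0 →ₗ[ℝ] Ω1) (dstar : Ω1 →ₗ[ℝ] Ω0)
    (bInt : ι → Ω1 →ₗ[ℝ] ℝ)
    (K : Submodule ℝ Ω0)
    (cval : Ω0 →ₗ[ℝ] (ι → ℝ)) (const : ℝ →ₗ[ℝ] Ω0)
    (hharm : ∀ ξ ∈ K, dstar (d ξ) = 0)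
    (hconstK : ∀ r : ℝ, const r ∈ K)
    (hcval_const : ∀ r : ℝ, cval (const r) = fun _ => r)
    (hd_const : ∀ r : ℝ, d (const r) = 0)
    (hconn : ∀ ξ : Ω0, d ξ = 0 → ∃ r : ℝ, ξ = const r)
    (hdirichlet : Function.Bijective fun ξ : K => cval (ξ : Ω0))
    (hGreen : ∀ ξ ∈ K, ∀ η : Ω1,
      (inner ℝ (d ξ) η : ℝ) = inner ℝ ξ (dstar η) + ∑ i, cval ξ i * bInt i η) :
    -- (1) the kernel of ev consists exactly of the constant functions
    (∀ ξ ∈ K, (∀ i, bInt i (d ξ) = 0) ↔ ∃ r : ℝ, ξ = const r) ∧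
    -- (2) the image of ev lies in the hyperplane {r : Σᵢ rᵢ = 0}
    (∀ ξ ∈ K, ∑ i, bInt i (d ξ) = 0) ∧
    -- (3) ev restricts to an isomorphism K₀ ≅ {r : Σᵢ rᵢ = 0}
    Nonempty { e :
        ↥(K ⊓ LinearMap.ker
            ((∑ i : ι, (LinearMap.proj i : (ι → ℝ) →ₗ[ℝ] ℝ)) ∘ₗ cval)) ≃ₗ[ℝ]
          ↥(LinearMap.ker (∑ i : ι, (LinearMap.proj i : (ι → ℝ) →ₗ[ℝ] ℝ))) //
        ∀ ξ, ∀ i : ι, ((e ξ : ι → ℝ) i) = bInt i (d (ξ : Ω0)) } :=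
  harmonic_boundary_evaluation_general d dstar bInt K cval const hharm hconstK hcval_const hd_const
    hconn hdirichlet hGreen
end

section
/- Let φ be a flow on a locally compact Hausdorff space, X an isolating neighborhood with S = Inv(X), and let (N₁,L₁), (N₂,L₂) be index pairs for S with N₁, N₂, L₁, L₂ ⊆ X such that N₁ ∪ P(L₁,X), N₂ ∪ P(L₂,X), P(L₁,X), P(L₂,X) are all positively invariant relative to X. Then the componentwise intersection (N₁∪P(L₁,X)) ∩ (N₂∪P(L₂,X)), together with P(L₁,X) ∩ P(L₂,X), satisfies the exit-set property: if x lies in the intersection of the N-sets and x·[0,∞) ⊄ X, then there exists t ≥ 0 with x·[0,t] contained in the intersection of the N-sets and x·t in the intersection of the exit sets. -/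
/-- `P(L,X)`: the set of points reachable from `L` by flowing forward while
staying entirely inside `X`. -/
def minPosInv {M : Type*} [TopologicalSpace M] (φ : Flow ℝ M)
    (L X : Set M) : Set M :=
  {p | ∃ y ∈ L, ∃ t : ℝ, 0 ≤ t ∧ (∀ s ∈ Set.Icc 0 t, φ s y ∈ X) ∧ p = φ t y}

/-- `A` is positively invariant relative to `X`. -/
def PosInvRel {M : Type*} [TopologicalSpace M] (φ : Flow ℝ M)
    (A X : Set M) : Prop :=
  ∀ x ∈ A, ∀ t : ℝ, 0 ≤ t → (∀ s ∈ Set.Icc 0 t, φ s x ∈ X) →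
    ∀ s ∈ Set.Icc 0 t, φ s x ∈ A

/-- The maximal invariant subset of `X`. -/
def flowInv {M : Type*} [TopologicalSpace M] (φ : Flow ℝ M) (X : Set M) : Set M :=
  {x ∈ X | ∀ t : ℝ, φ t x ∈ X}

/-- `(N, L)` is an index pair for the isolated invariant set `S`. -/
structure IsIndexPair {M : Type*} [TopologicalSpace M] (φ : Flow ℝ M)
    (S N L : Set M) : Prop where
  compact_N : IsCompact N
  compact_L : IsCompact L
  subset : L ⊆ N
  isolating : S ⊆ interior (closure (N \ L)) ∧ S = flowInv φ (closure (N \ L))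
  posInv : PosInvRel φ L N
  exit : ∀ x ∈ N, (¬ ∀ t : ℝ, 0 ≤ t → φ t x ∈ N) →
    ∃ t : ℝ, 0 ≤ t ∧ (∀ s ∈ Set.Icc 0 t, φ s x ∈ N) ∧ φ t x ∈ L

lemma minPosInv_subset {M : Type*} [TopologicalSpace M] (φ : Flow ℝ M)
    {L X : Set M} : minPosInv φ L X ⊆ X := by
  rintro p ⟨y, hy, t, ht0, hX, rfl⟩
  exact hX t ⟨ht0, le_refl t⟩

lemma subset_minPosInv {M : Type*} [TopologicalSpace M] (φ : Flow ℝ M)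
    {L X : Set M} (hLX : L ⊆ X) : L ⊆ minPosInv φ L X := by
  intro y hy
  exact ⟨y, hy, 0, le_refl 0, fun s hs => by
    rcases Set.mem_Icc.1 hs with ⟨h1, h2⟩
    have : s = 0 := le_antisymm h2 h1
    simp [this, φ.map_zero_apply, hLX hy], by simp [φ.map_zero_apply]⟩

/-- Each pair exits into its own `P`-set. -/
lemma exit_to_P {M : Type*} [TopologicalSpace M] (φ : Flow ℝ M)
    {X S N L : Set M} (hNX : N ⊆ X) (hpair : IsIndexPair φ S N L)
    {x : M} (hx : x ∈ N ∪ minPosInv φ L X)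
    (hleave : ¬ ∀ t : ℝ, 0 ≤ t → φ t x ∈ X) :
    ∃ t : ℝ, 0 ≤ t ∧ (∀ s ∈ Set.Icc 0 t, φ s x ∈ N ∪ minPosInv φ L X) ∧
      φ t x ∈ minPosInv φ L X := by
  rcases hx with hx | hx
  · have hnot : ¬ ∀ t : ℝ, 0 ≤ t → φ t x ∈ N := by
      intro h; exact hleave fun t ht => hNX (h t ht)
    rcases hpair.exit x hx hnot with ⟨t, ht0, hN, hL⟩
    exact ⟨t, ht0, fun s hs => Or.inl (hN s hs),
      subset_minPosInv φ (fun z hz => hNX (hpair.subset hz)) hL⟩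
  · exact ⟨0, le_refl 0, fun s hs => by
      rcases Set.mem_Icc.1 hs with ⟨h1, h2⟩
      have : s = 0 := le_antisymm h2 h1
      simpa [this, φ.map_zero_apply] using Or.inr hx,
      by simpa [φ.map_zero_apply] using hx⟩

/-- Combination step: extend the shorter exit trajectory along the longer one. -/
lemma combine_exit {M : Type*} [TopologicalSpace M] (φ : Flow ℝ M)
    {X A₁ A₂ P₂ : Set M} (hA₁X : A₁ ⊆ X) (hP₂A₂ : P₂ ⊆ A₂)
    (hPIP₂ : PosInvRel φ P₂ X) {x : M} {t₁ t₂ : ℝ}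
    (h2 : 0 ≤ t₂) (h21 : t₂ ≤ t₁)
    (htraj1 : ∀ s ∈ Set.Icc 0 t₁, φ s x ∈ A₁)
    (htraj2 : ∀ s ∈ Set.Icc 0 t₂, φ s x ∈ A₂)
    (hend2 : φ t₂ x ∈ P₂) :
    (∀ s ∈ Set.Icc (0:ℝ) t₁, φ s x ∈ A₁ ∩ A₂) ∧ φ t₁ x ∈ P₂ := by
  have hXtraj : ∀ u ∈ Set.Icc (0:ℝ) (t₁ - t₂), φ u (φ t₂ x) ∈ X := by
    intro u hu
    rcases Set.mem_Icc.1 hu with ⟨hu0, hu1⟩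
    have : φ u (φ t₂ x) = φ (u + t₂) x := (φ.map_add u t₂ x).symm
    rw [this]
    exact hA₁X (htraj1 (u + t₂) ⟨by linarith, by linarith⟩)
  have hP2 : ∀ u ∈ Set.Icc (0:ℝ) (t₁ - t₂), φ u (φ t₂ x) ∈ P₂ :=
    hPIP₂ (φ t₂ x) hend2 (t₁ - t₂) (by linarith) hXtraj
  have key : ∀ s ∈ Set.Icc t₂ t₁, φ s x ∈ P₂ := by
    intro s hs
    rcases Set.mem_Icc.1 hs with ⟨hs1, hs2⟩
    have h := hP2 (s - t₂) ⟨by linarith, by linarith⟩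
    rwa [← φ.map_add, sub_add_cancel] at h
  constructor
  · intro s hs
    rcases Set.mem_Icc.1 hs with ⟨hs0, hs1⟩
    refine ⟨htraj1 s hs, ?_⟩
    rcases le_total s t₂ with h | h
    · exact htraj2 s ⟨hs0, h⟩
    · exact hP₂A₂ (key s ⟨h, hs1⟩)
  · exact key t₁ ⟨h21, le_refl t₁⟩

/-- Let `X` be an isolating neighborhood with `S = Inv X`, and
let `(N₁,L₁)`, `(N₂,L₂)` be index pairs for `S` contained in `X` such that
`Nᵢ ∪ P(Lᵢ,X)` and `P(Lᵢ,X)` are positively invariant relative to `X`.  Then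
the componentwise intersection `((N₁∪P(L₁,X)) ∩ (N₂∪P(L₂,X)), P(L₁,X) ∩
P(L₂,X))` satisfies the exit-set property: if `x` lies in the intersection of
the `N`-sets and the forward orbit of `x` leaves `X`, then there is `t ≥ 0`
with `x·[0,t]` contained in the intersection of the `N`-sets and `φ t x` in
the intersection of the exit sets. -/
theorem intersection_index_pair_exit
    {M : Type*} [TopologicalSpace M] (φ : Flow ℝ M)
    (X S N₁ L₁ N₂ L₂ : Set M)
    (hX : IsCompact X) (hiso : flowInv φ X ⊆ interior X)
    (hS : S = flowInv φ X)
    (hN₁X : N₁ ⊆ X) (hN₂X : N₂ ⊆ X)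
    (hpair₁ : IsIndexPair φ S N₁ L₁) (hpair₂ : IsIndexPair φ S N₂ L₂)
    (hPI₁ : PosInvRel φ (N₁ ∪ minPosInv φ L₁ X) X)
    (hPI₂ : PosInvRel φ (N₂ ∪ minPosInv φ L₂ X) X)
    (hPIP₁ : PosInvRel φ (minPosInv φ L₁ X) X)
    (hPIP₂ : PosInvRel φ (minPosInv φ L₂ X) X) :
    ∀ x ∈ (N₁ ∪ minPosInv φ L₁ X) ∩ (N₂ ∪ minPosInv φ L₂ X),
      (¬ ∀ t : ℝ, 0 ≤ t → φ t x ∈ X) →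
      ∃ t : ℝ, 0 ≤ t ∧
        (∀ s ∈ Set.Icc 0 t,
          φ s x ∈ (N₁ ∪ minPosInv φ L₁ X) ∩ (N₂ ∪ minPosInv φ L₂ X)) ∧
        φ t x ∈ minPosInv φ L₁ X ∩ minPosInv φ L₂ X := by
  intro x hx hleave
  rcases exit_to_P φ hN₁X hpair₁ hx.1 hleave with ⟨t₁, ht₁0, htraj1, hend1⟩
  rcases exit_to_P φ hN₂X hpair₂ hx.2 hleave with ⟨t₂, ht₂0, htraj2, hend2⟩
  have hA₁X : N₁ ∪ minPosInv φ L₁ X ⊆ X :=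
    Set.union_subset hN₁X (minPosInv_subset φ)
  have hA₂X : N₂ ∪ minPosInv φ L₂ X ⊆ X :=
    Set.union_subset hN₂X (minPosInv_subset φ)
  rcases le_total t₂ t₁ with h | h
  · obtain ⟨htraj, hend⟩ := combine_exit φ hA₁X Set.subset_union_right hPIP₂
      ht₂0 h htraj1 htraj2 hend2
    exact ⟨t₁, ht₁0, htraj, htraj1 t₁ ⟨ht₁0, le_refl t₁⟩ |>.elim
      (fun _ => ⟨hend1, hend⟩) (fun _ => ⟨hend1, hend⟩)⟩
  · obtain ⟨htraj, hend⟩ := combine_exit φ hA₂X Set.subset_union_right hPIP₁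
      ht₁0 h htraj2 htraj1 hend1
    exact ⟨t₂, ht₂0, fun s hs => (htraj s hs).symm, ⟨hend, hend2⟩⟩
end
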